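/- (Proposition 2) The parity-seeking deletion algorithm for 2-3 red-black trees terminates and is correct: for every 2-3 red-black tree T and every key k occurring in T, the algorithm produces a valid 2-3 red-black tree whose inorder traversal is the inorder traversal of T with k removed. -/

import Mathlib

inductive Color where
  | red : Color
  | black : Color
deriving DecidableEq

inductive RBTree (α : Type) where
  | nil : RBTree α
  | node : Color → RBTree α → α → RBTree α → RBTree α

namespace RBTree

variable {α : Type}

/-- The color of a tree's root; external (nil) positions count as black. -/
def color : RBTree α → Color
  | .nil => Color.black
  | .node c _ _ _ => c

/-- Inorder traversal of the keys. -/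
def inorder : RBTree α → List α
  | .nil => []
  | .node _ l k r => inorder l ++ k :: inorder r

/-- `BH t n`: every path from the root of `t` to an external node contains
exactly `n` black nodes (property (3)). -/
inductive BH : RBTree α → ℕ → Prop where
  | nil : BH RBTree.nil 0
  | red {l r : RBTree α} {k : α} {n : ℕ} :
      BH l n → BH r n → BH (RBTree.node Color.red l k r) n
  | black {l r : RBTree α} {k : α} {n : ℕ} :
      BH l n → BH r n → BH (RBTree.node Color.black l k r) (n + 1)

/-- Property (2): every red node has black children (equivalently, a red node
never has a red parent). -/
def NoRedRed : RBTree α → Prop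
  | .nil => True
  | .node c l _ r =>
      (c = Color.red → color l = Color.black ∧ color r = Color.black) ∧
      NoRedRed l ∧ NoRedRed r

/-- The 2-3 condition: no node has two red children. -/
def No2Red : RBTree α → Prop
  | .nil => True
  | .node _ l _ r =>
      ¬(color l = Color.red ∧ color r = Color.red) ∧ No2Red l ∧ No2Red r

/-- A red-black tree: black root, no red-red violation, uniform black counts. -/
def IsRB (t : RBTree α) : Prop :=
  color t = Color.black ∧ NoRedRed t ∧ ∃ n, BH t n

/-- A 2-3 red-black tree: a red-black tree where no node has two red children. -/
def Is23RB (t : RBTree α) : Prop := IsRB t ∧ No2Red t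

/-- Recolor the root black. -/
def setBlack : RBTree α → RBTree α
  | .nil => .nil
  | .node _ l k r => .node Color.black l k r

/-- `Occurs s t`: `s` occurs as a subtree of `t`. -/
inductive Occurs : RBTree α → RBTree α → Prop where
  | refl (t : RBTree α) : Occurs t t
  | left {s l : RBTree α} (c : Color) (k : α) (r : RBTree α) :
      Occurs s l → Occurs s (RBTree.node c l k r)
  | right {s r : RBTree α} (c : Color) (k : α) (l : RBTree α) :
      Occurs s r → Occurs s (RBTree.node c l k r)

/-- `Replace s s' t t'`: `t'` is obtained from `t` by replacing one
occurrence of the subtree `s` by `s'`. -/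
inductive Replace (s s' : RBTree α) : RBTree α → RBTree α → Prop where
  | here : Replace s s' s s'
  | left {l l' : RBTree α} (c : Color) (k : α) (r : RBTree α) :
      Replace s s' l l' → Replace s s' (RBTree.node c l k r) (RBTree.node c l' k r)
  | right {r r' : RBTree α} (c : Color) (k : α) (l : RBTree α) :
      Replace s s' r r' → Replace s s' (RBTree.node c l k r) (RBTree.node c l k r')

/-- The list of black-node counts along all root-to-external paths
(in left-to-right order of the external nodes). -/
def bpaths : RBTree α → List ℕ
  | .nil => [0]
  | .node c l _ r =>
      (bpaths l ++ bpaths r).map (fun m => m + if c = Color.black then 1 else 0)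

/-- Height: the maximum number of edges on a path from the root to an external node. -/
def height : RBTree α → ℕ
  | .nil => 0
  | .node _ l _ r => max (height l) (height r) + 1

/-- Number of internal nodes. -/
def size : RBTree α → ℕ
  | .nil => 0
  | .node _ l _ r => size l + size r + 1

end RBTree

namespace RBTree

variable {α : Type}

/-- Parity-seeking rebalancing when the *left* child `x` of a node (of color
`c`, key `k`, right child = sibling `y`) is the root of a deficient subtree.
Returns the rebuilt subtree and a flag telling whether it is still deficient.
  * Case III: `y` red — rotate the parent toward `x` (former parent becomes
    red, `y` black) so that `x`'s new sibling is black, and continue there.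
  * Case II, red nephew — a single/double rotation with recoloring resolves
    the deficiency entirely.
  * Case II, both nephews black — recolor `y` red; if the parent was red it is
    recolored black (Case I) and the deficiency is resolved, otherwise the
    deficiency is lifted to the parent. -/
def delFixL : Color → RBTree α → α → RBTree α → RBTree α × Bool
  | _, x, k, RBTree.node Color.red yl yk yr =>
      let p := delFixL Color.red x k yl
      (RBTree.node Color.black p.1 yk yr, p.2)
  | c, x, k, RBTree.node Color.black yl yk (RBTree.node Color.red a wk b) =>
      (RBTree.node c (RBTree.node Color.black x k yl) yk
        (RBTree.node Color.black a wk b), false)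
  | c, x, k, RBTree.node Color.black (RBTree.node Color.red a wk b) yk yr =>
      (RBTree.node c (RBTree.node Color.black x k a) wk
        (RBTree.node Color.black b yk yr), false)
  | c, x, k, RBTree.node Color.black yl yk yr =>
      (RBTree.node Color.black x k (RBTree.node Color.red yl yk yr),
        decide (c = Color.black))
  | c, x, k, RBTree.nil => (RBTree.node c x k RBTree.nil, false)

/-- Mirror image of `delFixL`: the *right* child `x` is deficient, the sibling
`y` is the left child. -/
def delFixR : Color → RBTree α → α → RBTree α → RBTree α × Bool
  | _, RBTree.node Color.red yl yk yr, k, x =>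
      let p := delFixR Color.red yr k x
      (RBTree.node Color.black yl yk p.1, p.2)
  | c, RBTree.node Color.black (RBTree.node Color.red a wk b) yk yr, k, x =>
      (RBTree.node c (RBTree.node Color.black a wk b) yk
        (RBTree.node Color.black yr k x), false)
  | c, RBTree.node Color.black yl yk (RBTree.node Color.red a wk b), k, x =>
      (RBTree.node c (RBTree.node Color.black yl yk a) wk
        (RBTree.node Color.black b k x), false)
  | c, RBTree.node Color.black yl yk yr, k, x =>
      (RBTree.node Color.black (RBTree.node Color.red yl yk yr) k x,
        decide (c = Color.black))
  | c, RBTree.nil, k, x => (RBTree.node c RBTree.nil k x, false)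

/-- Delete the minimum of the nonempty tree `node c l x r`; returns the
minimum key, the remaining tree, and a deficiency flag. -/
def delMin : Color → RBTree α → α → RBTree α → α × RBTree α × Bool
  | c, RBTree.nil, x, r =>
      match r with
      | RBTree.nil => (x, RBTree.nil, decide (c = Color.black))
      | r => (x, setBlack r, false)
  | c, RBTree.node cl ll lx lr, x, r =>
      let p := delMin cl ll lx lr
      if p.2.2 then
        let q := delFixL c p.2.1 x r
        (p.1, q.1, q.2)
      else (p.1, RBTree.node c p.2.1 x r, false)

/-- The parity-seeking deletion algorithm: reduce the deletion to a leaf or a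
degree-1 node, then rebalance bottom-up with the parity-seeking rules.
Returns the resulting tree and a deficiency flag. -/
def delAux [LinearOrder α] (k : α) : RBTree α → RBTree α × Bool
  | .nil => (RBTree.nil, false)
  | .node c l x r =>
      if k < x then
        let p := delAux k l
        if p.2 then delFixL c p.1 x r else (RBTree.node c p.1 x r, false)
      else if x < k then
        let p := delAux k r
        if p.2 then delFixR c l x p.1 else (RBTree.node c l x p.1, false)
      else
        match l, r with
        | RBTree.nil, RBTree.nil => (RBTree.nil, decide (c = Color.black))
        | RBTree.nil, r => (setBlack r, false)
        | l, RBTree.nil => (setBlack l, false)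
        | l, RBTree.node rc rl rx rr =>
            let p := delMin rc rl rx rr
            if p.2.2 then delFixR c l p.1 p.2.1
            else (RBTree.node c l p.1 p.2.1, false)

/-- Deletion of the key `k` from a 2-3 red-black tree. -/
def delete [LinearOrder α] (k : α) (t : RBTree α) : RBTree α :=
  (delAux k t).1

end RBTree


/-!
Deletion returns the new subtree together with a flag marking it deficient, and the invariant
`DelResult` travels up the search path: the subtree obeys the red-black rules below its root,
its root stays black if it was black, and its black-height is unchanged or, if flagged, one less
under a black root. A red root is never flagged (Case I), so each repair step meets a black
deficient child. Case III rotates once and reaches Case II under a red parent; there a rotation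
at a red nephew, or recoloring the sibling red and the parent black, removes the deficiency, so
only a black parent passes it further up. Rotations preserve the inorder traversal, so the keys
are handled separately.
-/

namespace RBTree

variable {α : Type}

@[simp] def blackCount : Color → ℕ
  | .red => 0
  | .black => 1

@[simp] lemma color_nil : color (nil : RBTree α) = Color.black := rfl

@[simp] lemma color_node {c : Color} {l r : RBTree α} {k : α} : color (node c l k r) = c := rfl

@[simp] lemma inorder_setBlack (t : RBTree α) : inorder (setBlack t) = inorder t := by
  cases t <;> rfl

section BlackHeight

variable {c : Color} {l r : RBTree α} {k : α} {n : ℕ}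

@[simp] lemma bh_nil_iff : BH (nil : RBTree α) n ↔ n = 0 :=
  ⟨fun h => by cases h; rfl, fun h => h ▸ BH.nil⟩

@[simp] lemma bh_red_iff : BH (node Color.red l k r) n ↔ BH l n ∧ BH r n :=
  ⟨fun h => by cases h; exact ⟨‹_›, ‹_›⟩, fun h => BH.red h.1 h.2⟩

@[simp] lemma bh_black_succ_iff : BH (node Color.black l k r) (n + 1) ↔ BH l n ∧ BH r n :=
  ⟨fun h => by cases h; exact ⟨‹_›, ‹_›⟩, fun h => BH.black h.1 h.2⟩

@[simp] lemma not_bh_black_zero : ¬ BH (node Color.black l k r) 0 := fun h => by cases h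

lemma BH.node_blackCount (hl : BH l n) (hr : BH r n) : BH (node c l k r) (n + blackCount c) := by
  cases c <;> simp [hl, hr]

lemma BH.exists_of_node {m : ℕ} (h : BH (node c l k r) m) :
    ∃ n, BH l n ∧ BH r n ∧ m = n + blackCount c := by
  cases h <;> exact ⟨_, ‹_›, ‹_›, rfl⟩

end BlackHeight

def rebalanceL (c : Color) (p : RBTree α × Bool) (x : α) (r : RBTree α) : RBTree α × Bool :=
  if p.2 then delFixL c p.1 x r else (node c p.1 x r, false)

def rebalanceR (c : Color) (l : RBTree α) (x : α) (p : RBTree α × Bool) : RBTree α × Bool :=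
  if p.2 then delFixR c l x p.1 else (node c l x p.1, false)

def delRoot (c : Color) : RBTree α → RBTree α → RBTree α × Bool
  | nil, nil => (nil, decide (c = Color.black))
  | nil, r => (setBlack r, false)
  | l, nil => (setBlack l, false)
  | l, node rc rl rx rr => rebalanceR c l (delMin rc rl rx rr).1 (delMin rc rl rx rr).2

lemma delMin_node (c cl : Color) (ll lr r : RBTree α) (lx x : α) :
    delMin c (node cl ll lx lr) x r =
      ((delMin cl ll lx lr).1, rebalanceL c (delMin cl ll lx lr).2 x r) := by
  simp only [delMin, rebalanceL]
  split <;> rfl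

lemma delAux_node [LinearOrder α] (k : α) (c : Color) (l r : RBTree α) (x : α) :
    delAux k (node c l x r) =
      if k < x then rebalanceL c (delAux k l) x r
      else if x < k then rebalanceR c l x (delAux k r)
      else delRoot c l r := by
  simp only [delAux, rebalanceL, rebalanceR]
  split_ifs <;> rfl

section Inorder

lemma inorder_delFixL (c : Color) (x : RBTree α) (k : α) (y : RBTree α) :
    inorder (delFixL c x k y).1 = inorder x ++ k :: inorder y := by
  induction y generalizing c with
  | nil => simp [delFixL, inorder]
  | node cy yl yk yr ihl =>
    unfold delFixL
    split <;> simp_all [inorder]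

lemma inorder_delFixR (c : Color) (y : RBTree α) (k : α) (x : RBTree α) :
    inorder (delFixR c y k x).1 = inorder y ++ k :: inorder x := by
  induction y generalizing c with
  | nil => simp [delFixR, inorder]
  | node cy yl yk yr _ ihr =>
    unfold delFixR
    split <;> simp_all [inorder]

lemma inorder_rebalanceL (c : Color) (p : RBTree α × Bool) (x : α) (r : RBTree α) :
    inorder (rebalanceL c p x r).1 = inorder p.1 ++ x :: inorder r := by
  unfold rebalanceL
  split <;> simp [inorder_delFixL, inorder]

lemma inorder_rebalanceR (c : Color) (l : RBTree α) (x : α) (p : RBTree α × Bool) :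
    inorder (rebalanceR c l x p).1 = inorder l ++ x :: inorder p.1 := by
  unfold rebalanceR
  split <;> simp [inorder_delFixR, inorder]

lemma inorder_delMin (c : Color) (l : RBTree α) (x : α) (r : RBTree α) :
    (delMin c l x r).1 :: inorder (delMin c l x r).2.1 = inorder l ++ x :: inorder r := by
  induction l generalizing c x r with
  | nil => rcases r with _ | ⟨_, _, _, _⟩ <;> simp [delMin, inorder]
  | node cl ll lx lr ih =>
    rw [delMin_node, inorder_rebalanceL, ← List.cons_append, ih]
    rfl

lemma inorder_delRoot (c : Color) (l r : RBTree α) :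
    inorder (delRoot c l r).1 = inorder l ++ inorder r := by
  rcases l with _ | ⟨_, _, _, _⟩ <;> rcases r with _ | ⟨_, _, _, _⟩ <;>
    simp [delRoot, inorder, inorder_rebalanceR, inorder_delMin]

lemma erase_append_cons_of_pairwise_lt [LinearOrder α] {l r : List α} {x k : α}
    (h : (l ++ x :: r).Pairwise (· < ·)) :
    (l ++ x :: r).erase k =
      if k < x then l.erase k ++ x :: r
      else if x < k then l ++ x :: r.erase k
      else l ++ r := by
  simp only [List.pairwise_append, List.pairwise_cons, List.mem_cons] at h
  obtain ⟨-, ⟨hxr, -⟩, hlxr⟩ := h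
  have hlx : ∀ a ∈ l, a < x := fun a ha => hlxr a ha x (Or.inl rfl)
  split_ifs with hkx hxk
  · have hk : k ∉ x :: r := by
      simp only [List.mem_cons, not_or]
      exact ⟨hkx.ne, fun hkr => (hxr k hkr).asymm hkx⟩
    rw [List.erase_append]
    split_ifs with hkl
    · rfl
    · rw [List.erase_of_not_mem hk, List.erase_of_not_mem hkl]
  · rw [List.erase_append_right _ fun hkl => (hlx k hkl).asymm hxk,
      List.erase_cons_tail (by simpa using hxk.ne)]
  · obtain rfl : k = x := le_antisymm (not_lt.1 hxk) (not_lt.1 hkx)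
    rw [List.erase_append_right _ fun hkl => (hlx k hkl).false, List.erase_cons_head]

lemma inorder_delAux [LinearOrder α] (k : α) {t : RBTree α}
    (hs : (inorder t).Pairwise (· < ·)) : inorder (delAux k t).1 = (inorder t).erase k := by
  induction t with
  | nil => rfl
  | node c l x r ihl ihr =>
    have hs' : (inorder l ++ x :: inorder r).Pairwise (· < ·) := hs
    have hlr := List.pairwise_append.1 hs'
    rw [delAux_node, inorder, erase_append_cons_of_pairwise_lt hs']
    split_ifs
    · rw [inorder_rebalanceL, ihl hlr.1]
    · rw [inorder_rebalanceR, ihr (List.pairwise_cons.1 hlr.2.1).2]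
    · exact inorder_delRoot c l r

end Inorder

/-- What deleting from a subtree with root color `c` and black-height `m` may return: a pair
`(t, d)` where `d` flags `t` as deficient. -/
def DelResult (c : Color) (m : ℕ) (p : RBTree α × Bool) : Prop :=
  NoRedRed p.1 ∧ No2Red p.1 ∧ (c = Color.black → color p.1 = Color.black) ∧
    if p.2 then c = Color.black ∧ ∃ n, m = n + 1 ∧ BH p.1 n else BH p.1 m

lemma DelResult.is23RB {m : ℕ} {p : RBTree α × Bool} (h : DelResult Color.black m p) :
    Is23RB p.1 := by
  obtain ⟨h1, h2, hc, hbh⟩ := h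
  refine ⟨⟨hc rfl, h1, ?_⟩, h2⟩
  split_ifs at hbh
  exacts [hbh.2.imp fun _ => And.right, ⟨m, hbh⟩]

section Rebalance

variable {c : Color} {x y : RBTree α} {k : α} {n : ℕ}

theorem delResult_delFixL (hx : BH x n) (hxc : color x = Color.black) (hx1 : NoRedRed x)
    (hx2 : No2Red x) (hy : BH y (n + 1)) (hy1 : NoRedRed y) (hy2 : No2Red y)
    (hcy : c = Color.red → color y = Color.black) :
    DelResult c (n + 1 + blackCount c) (delFixL c x k y) := by
  induction y generalizing c with
  | nil => simp at hy
  | node cy yl yk yr ihl ihr =>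
    clear ihr
    cases cy
    · -- Case III: below the now red parent, the recursive call can never report a deficiency.
      obtain rfl : c = Color.black := by cases c <;> simp_all
      simp only [bh_red_iff, NoRedRed, No2Red, true_implies] at hy hy1 hy2
      have := ihl hy.1 hy1.2.1 hy2.2.1 (c := Color.red) fun _ => hy1.1.1
      simp_all [DelResult, delFixL, NoRedRed, No2Red]
    · clear ihl
      rcases yl with _ | ⟨_ | _, _, _, _⟩ <;> rcases yr with _ | ⟨_ | _, _, _, _⟩ <;> cases c <;>
        simp only [bh_black_succ_iff, bh_red_iff, bh_nil_iff, NoRedRed, No2Red] at hy hy1 hy2 <;>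
        casesm* _ ∧ _ <;> subst_vars <;> simp_all [DelResult, delFixL, NoRedRed, No2Red]

theorem delResult_delFixR (hx : BH x n) (hxc : color x = Color.black) (hx1 : NoRedRed x)
    (hx2 : No2Red x) (hy : BH y (n + 1)) (hy1 : NoRedRed y) (hy2 : No2Red y)
    (hcy : c = Color.red → color y = Color.black) :
    DelResult c (n + 1 + blackCount c) (delFixR c y k x) := by
  induction y generalizing c with
  | nil => simp at hy
  | node cy yl yk yr ihl ihr =>
    clear ihl
    cases cy
    · obtain rfl : c = Color.black := by cases c <;> simp_all
      simp only [bh_red_iff, NoRedRed, No2Red, true_implies] at hy hy1 hy2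
      have := ihr hy.2 hy1.2.2 hy2.2.2 (c := Color.red) fun _ => hy1.1.2
      simp_all [DelResult, delFixR, NoRedRed, No2Red]
    · clear ihr
      rcases yl with _ | ⟨_ | _, _, _, _⟩ <;> rcases yr with _ | ⟨_ | _, _, _, _⟩ <;> cases c <;>
        simp only [bh_black_succ_iff, bh_red_iff, bh_nil_iff, NoRedRed, No2Red] at hy hy1 hy2 <;>
        casesm* _ ∧ _ <;> subst_vars <;> simp_all [DelResult, delFixR, NoRedRed, No2Red]

theorem DelResult.rebalanceL {cl : Color} {r : RBTree α} {p : RBTree α × Bool}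
    (hp : DelResult cl n p) (hr : BH r n) (hr1 : NoRedRed r) (hr2 : No2Red r)
    (hc : c = Color.red → cl = Color.black ∧ color r = Color.black)
    (h2 : ¬(cl = Color.red ∧ color r = Color.red)) :
    DelResult c (n + blackCount c) (RBTree.rebalanceL c p k r) := by
  obtain ⟨t, _ | _⟩ := p
  · obtain ⟨ht1, ht2, htc, hbh⟩ := hp
    show DelResult c _ (node c t k r, false)
    refine ⟨⟨fun hcr => ⟨htc (hc hcr).1, (hc hcr).2⟩, ht1, hr1⟩,
      ⟨fun ⟨htr, hrr⟩ => h2 ⟨?_, hrr⟩, ht2, hr2⟩, id, BH.node_blackCount hbh hr⟩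
    cases cl
    · rfl
    · simp [htc rfl] at htr
  · obtain ⟨ht1, ht2, htc, rfl, n, rfl, hbh⟩ := hp
    exact delResult_delFixL hbh (htc rfl) ht1 ht2 hr hr1 hr2 fun hcr => (hc hcr).2

theorem DelResult.rebalanceR {cr : Color} {l : RBTree α} {p : RBTree α × Bool}
    (hp : DelResult cr n p) (hl : BH l n) (hl1 : NoRedRed l) (hl2 : No2Red l)
    (hc : c = Color.red → color l = Color.black ∧ cr = Color.black)
    (h2 : ¬(color l = Color.red ∧ cr = Color.red)) :
    DelResult c (n + blackCount c) (RBTree.rebalanceR c l k p) := by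
  obtain ⟨t, _ | _⟩ := p
  · obtain ⟨ht1, ht2, htc, hbh⟩ := hp
    show DelResult c _ (node c l k t, false)
    refine ⟨⟨fun hcr => ⟨(hc hcr).1, htc (hc hcr).2⟩, hl1, ht1⟩,
      ⟨fun ⟨hlr, htr⟩ => h2 ⟨hlr, ?_⟩, hl2, ht2⟩, id, BH.node_blackCount hl hbh⟩
    cases cr
    · rfl
    · simp [htc rfl] at htr
  · obtain ⟨ht1, ht2, htc, rfl, n, rfl, hbh⟩ := hp
    exact delResult_delFixR hbh (htc rfl) ht1 ht2 hl hl1 hl2 fun hcr => (hc hcr).1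

end Rebalance

section Deletion

variable {c : Color} {l r : RBTree α} {x : α} {n : ℕ}

theorem delResult_delMin (hl : BH l n) (hr : BH r n) (h1 : NoRedRed (node c l x r))
    (h2 : No2Red (node c l x r)) : DelResult c (n + blackCount c) (delMin c l x r).2 := by
  induction l generalizing c x r n with
  | nil =>
    obtain rfl := bh_nil_iff.1 hl
    rcases r with _ | ⟨_ | _, rl, rx, rr⟩ <;> cases c <;>
      simp_all [delMin, DelResult, NoRedRed, No2Red, setBlack]
  | node cl ll lx lr ih =>
    obtain ⟨hc1, hl1, hr1⟩ := h1
    obtain ⟨hc2, hl2, hr2⟩ := h2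
    obtain ⟨n', hll, hlr, rfl⟩ := hl.exists_of_node
    rw [delMin_node]
    exact DelResult.rebalanceL (ih hll hlr hl1 hl2) hr hr1 hr2 hc1 hc2

theorem delResult_delRoot (hl : BH l n) (hr : BH r n) (h1 : NoRedRed (node c l x r))
    (h2 : No2Red (node c l x r)) : DelResult c (n + blackCount c) (delRoot c l r) := by
  rcases l with _ | ⟨cl, ll, lx, lr⟩ <;> rcases r with _ | ⟨cr, rl, rx, rr⟩
  · obtain rfl := bh_nil_iff.1 hl
    cases c <;> simp [delRoot, DelResult, NoRedRed, No2Red]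
  · obtain rfl := bh_nil_iff.1 hl
    cases cr <;> cases c <;> simp_all [delRoot, DelResult, NoRedRed, No2Red, setBlack]
  · obtain rfl := bh_nil_iff.1 hr
    cases cl <;> cases c <;> simp_all [delRoot, DelResult, NoRedRed, No2Red, setBlack]
  · obtain ⟨hc1, hl1, hr1⟩ := h1
    obtain ⟨hc2, hl2, hr2⟩ := h2
    obtain ⟨n', hrl, hrr, rfl⟩ := hr.exists_of_node
    exact DelResult.rebalanceR (delResult_delMin hrl hrr hr1 hr2) hl hl1 hl2 hc1 hc2

theorem delResult_delAux [LinearOrder α] (k : α) {t : RBTree α} {m : ℕ}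
    (hb : BH t m) (h1 : NoRedRed t) (h2 : No2Red t) :
    DelResult (color t) m (delAux k t) := by
  induction t generalizing m with
  | nil =>
    obtain rfl := bh_nil_iff.1 hb
    simp [delAux, DelResult, NoRedRed, No2Red]
  | node c l x r ihl ihr =>
    obtain ⟨n, hl, hr, rfl⟩ := hb.exists_of_node
    have ⟨hc1, hl1, hr1⟩ := h1
    have ⟨hc2, hl2, hr2⟩ := h2
    rw [delAux_node]
    split_ifs
    · exact DelResult.rebalanceL (ihl hl hl1 hl2) hr hr1 hr2 hc1 hc2
    · exact DelResult.rebalanceR (ihr hr hr1 hr2) hl hl1 hl2 hc1 hc2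
    · exact delResult_delRoot hl hr h1 h2

end Deletion

end RBTree

open RBTree

theorem parity_seeking_delete_correct_general
    {α : Type} [LinearOrder α] (T : RBTree α) (k : α)
    (h23 : Is23RB T) (hbst : List.Pairwise (· < ·) (inorder T)) :
    Is23RB (delete k T) ∧ inorder (delete k T) = (inorder T).erase k := by
  obtain ⟨⟨hroot, h1, n, hbh⟩, h2⟩ := h23
  have hres := delResult_delAux k hbh h1 h2
  rw [hroot] at hres
  exact ⟨hres.is23RB, inorder_delAux k hbst⟩

/-- Proposition 2: The parity-seeking deletion algorithm for 2-3
red-black trees terminates (it is a total function) and is correct: for every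
2-3 red-black tree `T` and every key `k` occurring in `T`, it produces a valid
2-3 red-black tree whose inorder traversal is the inorder traversal of `T`
with `k` removed. -/
theorem parity_seeking_delete_correct
    {α : Type} [LinearOrder α] (T : RBTree α) (k : α)
    (h23 : Is23RB T) (hbst : List.Pairwise (· < ·) (inorder T))
    (hk : k ∈ inorder T) :
    Is23RB (delete k T) ∧ inorder (delete k T) = (inorder T).erase k :=
  parity_seeking_delete_correct_general T k h23 hbst
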